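/- Let ξ ∈ ℝ, let n be a positive integer, let δ > 0, and let c₇ > 0. Then there exists a constant c₆ > 0 (depending only on ξ, n, δ, c₇) with the following property: for every polynomial P ∈ ℤ[T] that is either of degree n, or monic of degree n+1, if at least n of the complex roots α of P, counted with multiplicity, satisfy |ξ − α| ≤ c₇ H(P)^{-δ}, then |P^{[k]}(ξ)| ≤ c₆ H(P)^{1−(n−k)δ} for all 0 ≤ k ≤ n. -/

import Mathlib

/-!
Over `ℂ` the Taylor expansion of `P` at `ξ` factors as `a_d ∏ (T - (α - ξ))` over the roots `α`.
The `n` roots within `r = c₇ H^{-δ}` of `ξ` give a factor whose `k`-th coefficient is an elementary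
symmetric function of degree `n - k` in numbers of size at most `r`, hence at most `2^n r^{n-k}`.
If `deg P = n`, the rest of the expansion is the leading coefficient, of size at most `H`; if `P` is
monic of degree `n + 1`, it is one linear factor `T - (γ - ξ)` with `|γ| ≤ H + 1` by Cauchy's bound.
Either way `|P^{[k]}(ξ)| ≪ r^{n-k+1} + H r^{n-k} ≪ H^{1-(n-k)δ}`.
-/

open Polynomial

/-- The height of an integer polynomial: the largest absolute value of its coefficients. -/
noncomputable def intPolyHeight (P : Polynomial ℤ) : ℝ :=
  ((P.support.sup fun k => (P.coeff k).natAbs : ℕ) : ℝ)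

/-- The `k`-th divided derivative of a real polynomial at `ξ`, i.e. the coefficient of
`(T - ξ)^k` in the Taylor expansion of `P` at `ξ`. -/
noncomputable def divDeriv (ξ : ℝ) (P : Polynomial ℝ) (k : ℕ) : ℝ :=
  (Polynomial.taylor ξ P).coeff k

/-- The `k`-th divided derivative at `ξ` of an integer polynomial, viewed over `ℝ`. -/
noncomputable def divDerivZ (ξ : ℝ) (P : Polynomial ℤ) (k : ℕ) : ℝ :=
  divDeriv ξ (P.map (Int.castRingHom ℝ)) k

/-- The multiset of complex roots of an integer polynomial (the conjugates of `α`, when `P`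
is the irreducible polynomial of `α`). -/
noncomputable def conjRoots (P : Polynomial ℤ) : Multiset ℂ :=
  (P.map (Int.castRingHom ℂ)).roots

/-- `q ≥ 1` is the denominator of a convergent of the continued fraction expansion of `ξ`. -/
def IsConvergentDenom (ξ : ℝ) (q : ℕ) : Prop :=
  1 ≤ q ∧ ∃ i : ℕ, (GenContFract.of ξ).dens i = (q : ℝ)

lemma intPolyHeight_nonneg (P : ℤ[X]) : 0 ≤ intPolyHeight P := Nat.cast_nonneg _

lemma abs_coeff_le_intPolyHeight (P : ℤ[X]) (i : ℕ) : |(P.coeff i : ℝ)| ≤ intPolyHeight P := by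
  rw [← Int.cast_abs, ← Int.natCast_natAbs, Int.cast_natCast, intPolyHeight, Nat.cast_le]
  by_cases h : P.coeff i = 0
  · simp [h]
  · exact Finset.le_sup (f := fun k => (P.coeff k).natAbs) (mem_support_iff.mpr h)

lemma one_le_intPolyHeight {P : ℤ[X]} (hP : P ≠ 0) : 1 ≤ intPolyHeight P := by
  have hlead : (1 : ℝ) ≤ |(P.leadingCoeff : ℝ)| := by
    exact_mod_cast Int.one_le_abs (leadingCoeff_ne_zero.mpr hP)
  exact hlead.trans (abs_coeff_le_intPolyHeight P _)

lemma norm_le_intPolyHeight_add_one_of_mem_conjRoots {P : ℤ[X]} {γ : ℂ} (hγ : γ ∈ conjRoots P) :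
    ‖γ‖ ≤ intPolyHeight P + 1 := by
  obtain ⟨hQ, hroot⟩ := mem_roots'.mp hγ
  set Q := P.map (Int.castRingHom ℂ)
  have hcoeff (i : ℕ) : ‖Q.coeff i‖ = |(P.coeff i : ℝ)| := by simp [Q, coeff_map]
  have hsup : (Finset.range Q.natDegree).sup (‖Q.coeff ·‖₊) ≤ (intPolyHeight P).toNNReal :=
    Finset.sup_le fun i _ => by
      rw [Real.le_toNNReal_iff_coe_le (intPolyHeight_nonneg P), coe_nnnorm, hcoeff]
      exact abs_coeff_le_intPolyHeight P i
  have hlead : 1 ≤ ‖Q.leadingCoeff‖₊ := by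
    have hP : P ≠ 0 := by rintro rfl; exact hQ (Polynomial.map_zero _)
    rw [← NNReal.coe_le_coe, coe_nnnorm, leadingCoeff_map_of_injective (RingHom.injective_int _),
      eq_intCast, Complex.norm_intCast, NNReal.coe_one]
    exact_mod_cast Int.one_le_abs (leadingCoeff_ne_zero.mpr hP)
  have hbound : cauchyBound Q ≤ (intPolyHeight P).toNNReal + 1 := by
    grw [cauchyBound, div_le_self zero_le hlead, hsup]
  have := (hroot.norm_lt_cauchyBound hQ).le.trans hbound
  rw [← NNReal.coe_le_coe, coe_nnnorm] at this
  simpa [intPolyHeight_nonneg P] using this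

section ProdXSubC

variable {K : Type*} [NormedField K]

lemma norm_multiset_prod_le_pow_card {s : Multiset K} {r : ℝ} (hs : ∀ z ∈ s, ‖z‖ ≤ r) :
    ‖s.prod‖ ≤ r ^ Multiset.card s := by
  rw [← normHom_apply, map_multiset_prod]
  exact Multiset.prod_map_le_pow_card (fun z _ => norm_nonneg z) hs

lemma norm_coeff_prod_X_sub_C_le {s : Multiset K} {r : ℝ} (hr : 0 ≤ r) (hs : ∀ z ∈ s, ‖z‖ ≤ r)
    {k : ℕ} (hk : k ≤ Multiset.card s) :
    ‖(s.map fun z => X - C z).prod.coeff k‖ ≤ 2 ^ Multiset.card s * r ^ (Multiset.card s - k) := by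
  set m := Multiset.card s - k
  rw [Multiset.prod_X_sub_C_coeff s hk, norm_mul, norm_pow, norm_neg, norm_one, one_pow, one_mul,
    Multiset.esymm]
  have hterm : ∀ x ∈ (Multiset.powersetCard m s).map fun t => ‖t.prod‖, x ≤ r ^ m := by
    simp only [Multiset.mem_map, Multiset.mem_powersetCard]
    rintro _ ⟨t, ⟨hts, htm⟩, rfl⟩
    rw [← htm]
    exact norm_multiset_prod_le_pow_card fun z hz => hs z (Multiset.mem_of_le hts hz)
  calc ‖((Multiset.powersetCard m s).map Multiset.prod).sum‖
      ≤ ((Multiset.powersetCard m s).map fun t => ‖t.prod‖).sum := by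
        simpa [Multiset.map_map] using norm_multiset_sum_le ((Multiset.powersetCard m s).map _)
    _ ≤ (Multiset.card s).choose m * r ^ m := by
        simpa using Multiset.sum_le_card_nsmul _ _ hterm
    _ ≤ 2 ^ Multiset.card s * r ^ m := by
        gcongr
        exact_mod_cast Nat.choose_le_two_pow _ _

lemma norm_coeff_prod_X_sub_C_mul_X_sub_C_le {s : Multiset K} {r : ℝ}
    (hr : 0 ≤ r) (hs : ∀ z ∈ s, ‖z‖ ≤ r) (c : K) {k : ℕ} (hk : k ≤ Multiset.card s) :
    ‖((s.map fun z => X - C z).prod * (X - C c)).coeff k‖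
      ≤ 2 ^ Multiset.card s
        * (r ^ (Multiset.card s - k + 1) + ‖c‖ * r ^ (Multiset.card s - k)) := by
  set A := (s.map fun z => X - C z).prod
  have hA := norm_coeff_prod_X_sub_C_le hr hs hk
  rcases k with _ | j
  · have h0 : 0 ≤ 2 ^ Multiset.card s * r ^ (Multiset.card s + 1) := by positivity
    simp only [mul_coeff_zero, coeff_sub, coeff_X_zero, coeff_C_zero, zero_sub, norm_mul,
      norm_neg, Nat.sub_zero] at hA ⊢
    nlinarith [norm_nonneg c]
  · have hj := norm_coeff_prod_X_sub_C_le hr hs (k := j) (by omega)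
    rw [show Multiset.card s - j = Multiset.card s - (j + 1) + 1 by omega] at hj
    calc ‖(A * (X - C c)).coeff (j + 1)‖ ≤ ‖A.coeff j‖ + ‖A.coeff (j + 1)‖ * ‖c‖ := by
          rw [coeff_mul_X_sub_C, ← norm_mul]; exact norm_sub_le _ _
      _ ≤ _ := by nlinarith [norm_nonneg c]

end ProdXSubC

lemma taylor_eq_C_leadingCoeff_mul_prod_roots {K : Type*} [Field K] {Q : K[X]} (hQ : Q.Splits)
    (ξ : K) :
    taylor ξ Q = C Q.leadingCoeff * ((Q.roots.map (· - ξ)).map fun z => X - C z).prod := by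
  conv_lhs => rw [hQ.eq_prod_roots]
  rw [taylor_apply, mul_comp, C_comp, multiset_prod_comp, Multiset.map_map, Multiset.map_map]
  congr 2
  refine Multiset.map_congr rfl fun α _ => ?_
  simp only [Function.comp_apply, sub_comp, X_comp, C_comp, C_sub]
  ring

lemma abs_divDerivZ_eq_norm_coeff_taylor (ξ : ℝ) (P : ℤ[X]) (k : ℕ) :
    |divDerivZ ξ P k| = ‖(taylor (ξ : ℂ) (P.map (Int.castRingHom ℂ))).coeff k‖ := by
  have hmap : (P.map (Int.castRingHom ℝ)).map Complex.ofRealHom = P.map (Int.castRingHom ℂ) := by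
    rw [Polynomial.map_map]; congr 1
  rw [divDerivZ, divDeriv, ← hmap, show (ξ : ℂ) = Complex.ofRealHom ξ from rfl, ← map_taylor,
    coeff_map, Complex.ofRealHom_eq_coe, Complex.norm_real, Real.norm_eq_abs]

lemma taylor_eq_C_leadingCoeff_mul_prod_mul_prod {K : Type*} [Field K] [DecidableEq K] {Q : K[X]}
    (hQ : Q.Splits) (ξ : K) {S : Multiset K} (hS : S ≤ Q.roots) :
    taylor ξ Q = C Q.leadingCoeff * ((S.map (· - ξ)).map fun z => X - C z).prod
      * (((Q.roots - S).map (· - ξ)).map fun z => X - C z).prod := by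
  rw [taylor_eq_C_leadingCoeff_mul_prod_roots hQ, mul_assoc, ← Multiset.prod_add,
    ← Multiset.map_add, ← Multiset.map_add, add_tsub_cancel_of_le hS]

lemma card_conjRoots (P : ℤ[X]) : Multiset.card (conjRoots P) = P.natDegree :=
  IsAlgClosed.card_roots_map_eq_natDegree_of_injective P (RingHom.injective_int _)

section CloseRoots

variable {P : ℤ[X]} {S : Multiset ℂ} {n : ℕ} {ξ r : ℝ}

lemma norm_le_of_mem_map_sub (hclose : ∀ z ∈ S, ‖(ξ : ℂ) - z‖ ≤ r) :
    ∀ z ∈ S.map (· - (ξ : ℂ)), ‖z‖ ≤ r := by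
  simpa [Multiset.forall_mem_map_iff, norm_sub_rev] using hclose

lemma abs_divDerivZ_le_of_natDegree_eq_card (hS : S ≤ conjRoots P) (hcard : Multiset.card S = n)
    (hdeg : P.natDegree = n) (hr : 0 ≤ r) (hclose : ∀ z ∈ S, ‖(ξ : ℂ) - z‖ ≤ r)
    {k : ℕ} (hk : k ≤ n) :
    |divDerivZ ξ P k| ≤ intPolyHeight P * (2 ^ n * r ^ (n - k)) := by
  have hrest : conjRoots P - S = 0 := by
    rw [← Multiset.card_eq_zero, Multiset.card_sub hS, card_conjRoots, hdeg, hcard, Nat.sub_self]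
  rw [abs_divDerivZ_eq_norm_coeff_taylor,
    taylor_eq_C_leadingCoeff_mul_prod_mul_prod (IsAlgClosed.splits _) _ hS]
  rw [conjRoots] at hrest
  simp only [hrest, Multiset.map_zero, Multiset.prod_zero, mul_one, coeff_C_mul, norm_mul]
  have hlead : ‖(P.map (Int.castRingHom ℂ)).leadingCoeff‖ ≤ intPolyHeight P := by
    rw [leadingCoeff_map_of_injective (RingHom.injective_int _), eq_intCast, Complex.norm_intCast]
    exact abs_coeff_le_intPolyHeight P _
  have hcoeff := norm_coeff_prod_X_sub_C_le hr (norm_le_of_mem_map_sub hclose)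
    (k := k) (by rwa [Multiset.card_map, hcard])
  rw [Multiset.card_map, hcard] at hcoeff
  exact mul_le_mul hlead hcoeff (norm_nonneg _) (intPolyHeight_nonneg P)

lemma abs_divDerivZ_le_of_monic (hS : S ≤ conjRoots P) (hcard : Multiset.card S = n)
    (hmonic : P.Monic) (hdeg : P.natDegree = n + 1) (hr : 0 ≤ r)
    (hclose : ∀ z ∈ S, ‖(ξ : ℂ) - z‖ ≤ r) {k : ℕ} (hk : k ≤ n) :
    |divDerivZ ξ P k| ≤ 2 ^ n * (r ^ (n - k + 1) + (intPolyHeight P + 1 + |ξ|) * r ^ (n - k)) := by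
  obtain ⟨γ, hγ⟩ : ∃ γ, conjRoots P - S = {γ} := by
    rw [← Multiset.card_eq_one, Multiset.card_sub hS, card_conjRoots, hdeg, hcard,
      Nat.add_sub_cancel_left]
  have hγroot : γ ∈ conjRoots P :=
    Multiset.mem_of_le tsub_le_self (hγ ▸ Multiset.mem_singleton_self γ)
  have hshift : ‖γ - ξ‖ ≤ intPolyHeight P + 1 + |ξ| := by
    grw [norm_sub_le, norm_le_intPolyHeight_add_one_of_mem_conjRoots hγroot, Complex.norm_real,
      Real.norm_eq_abs]
  rw [abs_divDerivZ_eq_norm_coeff_taylor,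
    taylor_eq_C_leadingCoeff_mul_prod_mul_prod (IsAlgClosed.splits _) _ hS]
  rw [conjRoots] at hγ
  simp only [hγ, (hmonic.map _).leadingCoeff, C_1, one_mul, Multiset.map_singleton,
    Multiset.prod_singleton]
  have hcoeff := norm_coeff_prod_X_sub_C_mul_X_sub_C_le hr (norm_le_of_mem_map_sub hclose)
    (γ - ξ) (k := k) (by rwa [Multiset.card_map, hcard])
  rw [Multiset.card_map, hcard] at hcoeff
  grw [hcoeff, hshift]

lemma abs_divDerivZ_le (hS : S ≤ conjRoots P) (hcard : Multiset.card S = n)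
    (hdeg : P.natDegree = n ∨ (P.Monic ∧ P.natDegree = n + 1))
    (hr : 0 ≤ r) (hclose : ∀ z ∈ S, ‖(ξ : ℂ) - z‖ ≤ r) {k : ℕ} (hk : k ≤ n) :
    |divDerivZ ξ P k|
      ≤ 2 ^ n * (r ^ (n - k + 1) + (|ξ| + 2) * (intPolyHeight P * r ^ (n - k))) := by
  have hHr : 0 ≤ intPolyHeight P * r ^ (n - k) :=
    mul_nonneg (intPolyHeight_nonneg P) (pow_nonneg hr _)
  rcases hdeg with hdeg | ⟨hmonic, hdeg⟩
  · have h : intPolyHeight P * r ^ (n - k)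
        ≤ r ^ (n - k + 1) + (|ξ| + 2) * (intPolyHeight P * r ^ (n - k)) := by
      nlinarith [abs_nonneg ξ, pow_nonneg hr (n - k + 1)]
    grw [abs_divDerivZ_le_of_natDegree_eq_card hS hcard hdeg hr hclose hk, mul_left_comm, h]
  · have hH := one_le_intPolyHeight hmonic.ne_zero
    have h : (intPolyHeight P + 1 + |ξ|) * r ^ (n - k)
        ≤ (|ξ| + 2) * (intPolyHeight P * r ^ (n - k)) := by
      nlinarith [mul_nonneg (mul_nonneg (by positivity : (0 : ℝ) ≤ |ξ| + 1) (sub_nonneg.2 hH))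
        (pow_nonneg hr (n - k))]
    grw [abs_divDerivZ_le_of_monic hS hcard hmonic hdeg hr hclose hk, h]

end CloseRoots

lemma pow_succ_add_mul_mul_pow_le {H δ c K : ℝ} (hH : 1 ≤ H) (hδ : 0 ≤ δ) (hc : 0 ≤ c)
    (hK : 0 ≤ K) {m n : ℕ} (hmn : m ≤ n) :
    (c * H ^ (-δ)) ^ (m + 1) + K * (H * (c * H ^ (-δ)) ^ m)
      ≤ (1 + K) * (max c 1 ^ (n + 1) * H ^ (1 - m * δ)) := by
  have hH0 : 0 < H := one_pos.trans_le hH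
  have hpow (j : ℕ) : (c * H ^ (-δ)) ^ j = c ^ j * H ^ (-(j * δ)) := by
    rw [mul_pow, ← Real.rpow_natCast (H ^ _), ← Real.rpow_mul hH0.le, neg_mul, mul_comm δ]
  have hc' {j : ℕ} (hj : j ≤ n + 1) : c ^ j ≤ max c 1 ^ (n + 1) :=
    (pow_le_pow_left₀ hc (le_max_left c 1) j).trans (pow_le_pow_right₀ (le_max_right c 1) hj)
  have hfirst : (c * H ^ (-δ)) ^ (m + 1) ≤ max c 1 ^ (n + 1) * H ^ (1 - m * δ) := by
    rw [hpow]
    gcongr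
    · exact hc' (by omega)
    · push_cast; linarith
  have hsecond : H * (c * H ^ (-δ)) ^ m ≤ max c 1 ^ (n + 1) * H ^ (1 - m * δ) := by
    rw [hpow, mul_left_comm, sub_eq_add_neg, Real.rpow_add hH0, Real.rpow_one]
    gcongr
    exact hc' (by omega)
  nlinarith [mul_le_mul_of_nonneg_left hsecond hK]

theorem close_roots_implies_small_divided_derivs_general
    (ξ : ℝ) (n : ℕ) (δ : ℝ) (hδ : 0 < δ) (c₇ : ℝ) (hc₇ : 0 < c₇) :
    ∃ c₆ : ℝ, 0 < c₆ ∧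
      ∀ P : Polynomial ℤ,
        (P.natDegree = n ∨ (P.Monic ∧ P.natDegree = n + 1)) →
        (∃ S : Multiset ℂ, S ≤ conjRoots P ∧ Multiset.card S = n ∧
          ∀ z ∈ S, ‖(ξ : ℂ) - z‖ ≤ c₇ * intPolyHeight P ^ (-δ)) →
        ∀ k ≤ n, |divDerivZ ξ P k| ≤ c₆ * intPolyHeight P ^ (1 - ((n : ℝ) - k) * δ) := by
  refine ⟨2 ^ n * ((1 + (|ξ| + 2)) * max c₇ 1 ^ (n + 1)), by positivity, ?_⟩
  rintro P hdeg ⟨S, hS, hcard, hclose⟩ k hk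
  rcases eq_or_ne P 0 with rfl | hP
  · simp only [divDerivZ, divDeriv, Polynomial.map_zero, map_zero, coeff_zero, abs_zero]
    exact mul_nonneg (by positivity) (Real.rpow_nonneg (intPolyHeight_nonneg 0) _)
  set H := intPolyHeight P
  have hr : 0 ≤ c₇ * H ^ (-δ) := mul_nonneg hc₇.le (Real.rpow_nonneg (intPolyHeight_nonneg P) _)
  calc |divDerivZ ξ P k|
      ≤ 2 ^ n * ((c₇ * H ^ (-δ)) ^ (n - k + 1) + (|ξ| + 2) * (H * (c₇ * H ^ (-δ)) ^ (n - k))) :=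
        abs_divDerivZ_le hS hcard hdeg hr hclose hk
    _ ≤ 2 ^ n * ((1 + (|ξ| + 2)) * (max c₇ 1 ^ (n + 1) * H ^ (1 - ((n - k : ℕ) : ℝ) * δ))) := by
        gcongr
        exact pow_succ_add_mul_mul_pow_le (one_le_intPolyHeight hP) hδ.le hc₇.le (by positivity)
          (Nat.sub_le n k)
    _ = _ := by rw [Nat.cast_sub hk]; ring

/-- Proposition 3, (ii) ⟹ (i): if at least `n` of the roots of `P` (with multiplicity) are
close to `ξ`, then every divided derivative of `P` at `ξ` is small. -/
theorem close_roots_implies_small_divided_derivs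
    (ξ : ℝ) (n : ℕ) (hn : 0 < n) (δ : ℝ) (hδ : 0 < δ) (c₇ : ℝ) (hc₇ : 0 < c₇) :
    ∃ c₆ : ℝ, 0 < c₆ ∧
      ∀ P : Polynomial ℤ,
        (P.natDegree = n ∨ (P.Monic ∧ P.natDegree = n + 1)) →
        (∃ S : Multiset ℂ, S ≤ conjRoots P ∧ Multiset.card S = n ∧
          ∀ z ∈ S, ‖(ξ : ℂ) - z‖ ≤ c₇ * intPolyHeight P ^ (-δ)) →
        ∀ k ≤ n, |divDerivZ ξ P k| ≤ c₆ * intPolyHeight P ^ (1 - ((n : ℝ) - k) * δ) :=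
  close_roots_implies_small_divided_derivs_general ξ n δ hδ c₇ hc₇
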